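/- arXiv:2601.21895 — 2 statements merged into one kernel-verified Lean document; each statement's English description precedes it below -/
import Mathlib

section
/- Let E be a real Hilbert space, M ⊆ E a nonempty closed convex Borel-measurable subset with metric projection Π_M, and p a Borel probability measure on E. Let κ be a Markov kernel on E (a measurable assignment x ↦ κ(x) of Borel probability measures on E) such that κ(x)(M) = 1 for every x ∈ E and κ(Π_M(x)) = κ(x) for every x ∈ E. Assume the function (x, y) ↦ ‖x − y‖ is integrable against p ⊗ κ. Then ∫_E ∫_E ‖x − y‖ dκ(x)(y) dp(x) ≥ ∫_E ∫_E ‖x − y‖ dκ(x)(y) dq(x), where q = (Π_M)_* p is the pushforward of p under Π_M. -/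
/-!
Points of a convex set `M` are at least as close to the projection `Π_M x` as to `x` itself:
the variational inequality `⟪x - Π_M x, y - Π_M x⟫ ≤ 0` makes the angle at `Π_M x` obtuse.
Since the rewrite kernel only produces points of `M` and does not distinguish `x` from `Π_M x`,
integrating this pointwise inequality against `κ x` and then against `p` compares the expected
reconstruction error of `x` with that of `Π_M x`, and the latter is the error under `q = (Π_M)_* p`.
-/

open MeasureTheory ProbabilityTheory
open scoped RealInnerProductSpace

section Projection

variable {E : Type*} [NormedAddCommGroup E] [InnerProductSpace ℝ E]

theorem norm_sub_le_norm_sub_of_real_inner_le_zero {x u y : E} (h : ⟪x - u, y - u⟫ ≤ 0) :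
    ‖u - y‖ ≤ ‖x - y‖ := by
  have hsplit : ‖x - y‖ ^ 2 = ‖x - u‖ ^ 2 - 2 * ⟪x - u, y - u⟫ + ‖u - y‖ ^ 2 := by
    rw [show x - y = (x - u) - (y - u) by abel, norm_sub_sq_real, ← norm_neg (y - u), neg_sub]
  exact (sq_le_sq₀ (norm_nonneg _) (norm_nonneg _)).mp <| by nlinarith [sq_nonneg ‖x - u‖]

theorem Convex.real_inner_le_zero_of_forall_norm_sub_le {M : Set E} (hM : Convex ℝ M)
    {x u : E} (hu : u ∈ M) (hmin : ∀ w ∈ M, ‖x - u‖ ≤ ‖x - w‖) :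
    ∀ y ∈ M, ⟪x - u, y - u⟫ ≤ 0 := by
  have : Nonempty M := ⟨⟨u, hu⟩⟩
  have hinf : ‖x - u‖ = ⨅ w : M, ‖x - w‖ :=
    le_antisymm (le_ciInf fun w => hmin w w.2)
      (ciInf_le (f := fun w : M => ‖x - w‖) ⟨0, by rintro _ ⟨w, rfl⟩; exact norm_nonneg _⟩
        ⟨u, hu⟩)
  exact (norm_eq_iInf_iff_real_inner_le_zero hM hu).mp hinf

theorem Convex.norm_sub_le_of_forall_norm_sub_le {M : Set E} (hM : Convex ℝ M)
    {x u : E} (hu : u ∈ M) (hmin : ∀ w ∈ M, ‖x - u‖ ≤ ‖x - w‖) {y : E} (hy : y ∈ M) :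
    ‖u - y‖ ≤ ‖x - y‖ :=
  norm_sub_le_norm_sub_of_real_inner_le_zero
    (hM.real_inner_le_zero_of_forall_norm_sub_le hu hmin y hy)

theorem Convex.integral_norm_sub_le_of_forall_norm_sub_le [MeasurableSpace E] {M : Set E}
    (hM : Convex ℝ M) {x u : E} (hu : u ∈ M) (hmin : ∀ w ∈ M, ‖x - u‖ ≤ ‖x - w‖)
    {ν : Measure E} (hν : ∀ᵐ y ∂ν, y ∈ M) (hint : Integrable (fun y => ‖x - y‖) ν) :
    ∫ y, ‖u - y‖ ∂ν ≤ ∫ y, ‖x - y‖ ∂ν :=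
  integral_mono_of_nonneg (.of_forall fun _ => norm_nonneg _) hint <| by
    filter_upwards [hν] with y hy using hM.norm_sub_le_of_forall_norm_sub_le hu hmin hy

end Projection

theorem expected_reconstruction_error_ge_kernel_general
    {E : Type*} [NormedAddCommGroup E] [InnerProductSpace ℝ E]
    [MeasurableSpace E]
    (M : Set E) (hMconv : Convex ℝ M)
    (hMmeas : MeasurableSet M)
    (P : E → E) (hPmeas : Measurable P) (hPmem : ∀ x, P x ∈ M)
    (hPnear : ∀ x, ∀ y ∈ M, ‖x - P x‖ ≤ ‖x - y‖)
    (κ : Kernel E E) [IsMarkovKernel κ]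
    (hκM : ∀ x, κ x M = 1)
    (hκP : ∀ x, κ (P x) = κ x)
    (p : Measure E) [IsProbabilityMeasure p]
    (hint : Integrable (fun z : E × E => ‖z.1 - z.2‖) (p.compProd κ)) :
    ∫ x, ∫ y, ‖x - y‖ ∂(κ x) ∂(p.map P) ≤ ∫ x, ∫ y, ‖x - y‖ ∂(κ x) ∂p := by
  set g : E → ℝ := fun x => ∫ y, ‖x - y‖ ∂(κ x)
  obtain ⟨hint_κ, hint_g⟩ := (Measure.integrable_compProd_iff hint.aestronglyMeasurable).mp hint
  replace hint_g : Integrable g p := by simpa only [norm_norm] using hint_g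
  have hgP : ∀ᵐ x ∂p, g (P x) ≤ g x := by
    filter_upwards [hint_κ] with x hx
    simp only [g, hκP x]
    exact hMconv.integral_norm_sub_le_of_forall_norm_sub_le (hPmem x) (hPnear x)
      ((prob_compl_eq_zero_iff hMmeas).mpr (hκM x)) hx
  by_cases hI : Integrable g (p.map P)
  · rw [integral_map hPmeas.aemeasurable hI.aestronglyMeasurable]
    exact integral_mono_of_nonneg (.of_forall fun _ => integral_nonneg fun _ => norm_nonneg _)
      hint_g hgP
  · rw [integral_undef hI]
    exact integral_nonneg fun _ => integral_nonneg fun _ => norm_nonneg _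

/-- Proposition 1 of the paper (kernel/stochastic-rewrite version).  Let `M` be a
nonempty closed convex measurable subset of a real Hilbert space with metric
projection `P`, `p` a Borel probability measure, and `κ` a Markov kernel with
`κ x M = 1` and `κ (P x) = κ x` for all `x`.  If `(x, y) ↦ ‖x − y‖` is
integrable against `p ⊗ κ`, then the expected reconstruction error under `p`
dominates the one under the pushforward `q = P_* p`. -/
theorem expected_reconstruction_error_ge_kernel
    {E : Type*} [NormedAddCommGroup E] [InnerProductSpace ℝ E] [CompleteSpace E]
    [MeasurableSpace E] [BorelSpace E]
    (M : Set E) (hM : M.Nonempty) (hMclosed : IsClosed M) (hMconv : Convex ℝ M)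
    (hMmeas : MeasurableSet M)
    (P : E → E) (hPmeas : Measurable P) (hPmem : ∀ x, P x ∈ M)
    (hPnear : ∀ x, ∀ y ∈ M, ‖x - P x‖ ≤ ‖x - y‖)
    (κ : Kernel E E) [IsMarkovKernel κ]
    (hκM : ∀ x, κ x M = 1)
    (hκP : ∀ x, κ (P x) = κ x)
    (p : Measure E) [IsProbabilityMeasure p]
    (hint : Integrable (fun z : E × E => ‖z.1 - z.2‖) (p.compProd κ)) :
    ∫ x, ∫ y, ‖x - y‖ ∂(κ x) ∂(p.map P) ≤ ∫ x, ∫ y, ‖x - y‖ ∂(κ x) ∂p :=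
  expected_reconstruction_error_ge_kernel_general M hMconv hMmeas P hPmeas hPmem hPnear κ hκM hκP p
    hint
end

section
/- Let E be a real Hilbert space, M ⊆ E a nonempty closed convex subset with metric projection Π_M, p a Borel probability measure on E, and R : E → E a Borel-measurable map such that R(x) ∈ M for every x and R(Π_M(x)) = R(x) for every x. Assume x ↦ ‖x − R(x)‖ is p-integrable. If ∫_E ‖x − R(x)‖ dp(x) = ∫_E ‖x − R(x)‖ d((Π_M)_* p)(x), then p-almost every x satisfies x ∈ M. -/
/-!
Since `R x ∈ M`, the Pythagorean inequality for the nearest-point map gives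
`‖P x - R x‖² + ‖x - P x‖² ≤ ‖x - R x‖²`, and `R (P x) = R x` turns the error under `P_* p` into
`∫ ‖P x - R x‖ ∂p`. So the error under `p` dominates it pointwise; equal integrals force
`‖x - R x‖ = ‖P x - R x‖` almost everywhere, hence `‖x - P x‖ = 0`, i.e. `x = P x ∈ M`.
-/

open MeasureTheory

section NearestPoint

variable {E : Type*} [NormedAddCommGroup E] [InnerProductSpace ℝ E]
  {M : Set E} {P : E → E}

theorem real_inner_sub_nearest_le_zero (hMconv : Convex ℝ M) (hPmem : ∀ x, P x ∈ M)
    (hPnear : ∀ x, ∀ y ∈ M, ‖x - P x‖ ≤ ‖x - y‖) (x : E) {y : E} (hy : y ∈ M) :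
    inner ℝ (x - P x) (y - P x) ≤ 0 := by
  have : Nonempty M := ⟨⟨P x, hPmem x⟩⟩
  refine (norm_eq_iInf_iff_real_inner_le_zero hMconv (hPmem x)).mp ?_ y hy
  refine le_antisymm (le_ciInf fun w : M => hPnear x w.1 w.2) ?_
  exact ciInf_le ⟨0, fun _ ⟨_, h⟩ => h ▸ norm_nonneg _⟩ (⟨P x, hPmem x⟩ : M)

theorem norm_sub_nearest_sq_add_norm_sub_sq_le (hMconv : Convex ℝ M) (hPmem : ∀ x, P x ∈ M)
    (hPnear : ∀ x, ∀ y ∈ M, ‖x - P x‖ ≤ ‖x - y‖) (x : E) {y : E} (hy : y ∈ M) :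
    ‖x - P x‖ ^ 2 + ‖P x - y‖ ^ 2 ≤ ‖x - y‖ ^ 2 := by
  have hinner := real_inner_sub_nearest_le_zero hMconv hPmem hPnear x hy
  have hsplit : x - y = (x - P x) - (y - P x) := by abel
  rw [hsplit, norm_sub_sq_real (x - P x), norm_sub_rev (P x) y]
  linarith

theorem norm_nearest_sub_le (hMconv : Convex ℝ M) (hPmem : ∀ x, P x ∈ M)
    (hPnear : ∀ x, ∀ y ∈ M, ‖x - P x‖ ≤ ‖x - y‖) (x : E) {y : E} (hy : y ∈ M) :
    ‖P x - y‖ ≤ ‖x - y‖ := by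
  have := norm_sub_nearest_sq_add_norm_sub_sq_le hMconv hPmem hPnear x hy
  refine (pow_le_pow_iff_left₀ (norm_nonneg _) (norm_nonneg _) two_ne_zero).mp ?_
  linarith [sq_nonneg ‖x - P x‖]

theorem nearest_eq_of_norm_sub_le (hMconv : Convex ℝ M) (hPmem : ∀ x, P x ∈ M)
    (hPnear : ∀ x, ∀ y ∈ M, ‖x - P x‖ ≤ ‖x - y‖) {x y : E} (hy : y ∈ M)
    (h : ‖x - y‖ ≤ ‖P x - y‖) : P x = x := by
  have := norm_sub_nearest_sq_add_norm_sub_sq_le hMconv hPmem hPnear x hy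
  have hsq : ‖x - P x‖ ^ 2 = 0 :=
    le_antisymm (by nlinarith [norm_nonneg (x - y)]) (sq_nonneg _)
  rw [sq_eq_zero_iff, norm_sub_eq_zero_iff] at hsq
  exact hsq.symm

end NearestPoint

section Integral

variable {α β : Type*} [MeasurableSpace α] [MeasurableSpace β] {μ : Measure α}

theorem integral_map_le_integral_comp {φ : α → β} (hφ : AEMeasurable φ μ) {f : β → ℝ}
    (hf : 0 ≤ f) : ∫ y, f y ∂μ.map φ ≤ ∫ x, f (φ x) ∂μ := by
  by_cases hfm : AEStronglyMeasurable f (μ.map φ)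
  · exact (integral_map hφ hfm).le
  · rw [integral_undef fun hfi => hfm hfi.1]
    exact integral_nonneg fun x => hf (φ x)

theorem ae_eq_of_integral_le_of_le {f g : α → ℝ} (hg : 0 ≤ g) (hgf : g ≤ f)
    (hf : Integrable f μ) (hint : ∫ x, f x ∂μ ≤ ∫ x, g x ∂μ) : f =ᵐ[μ] g := by
  have hf0 : 0 ≤ f := fun x => (hg x).trans (hgf x)
  by_cases hgm : AEStronglyMeasurable g μ
  · have hgi : Integrable g μ := hf.mono hgm <| ae_of_all _ fun x => by
      simpa only [Real.norm_eq_abs, abs_of_nonneg (hg x), abs_of_nonneg (hf0 x)] using hgf x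
    exact ((integral_eq_iff_of_ae_le hgi hf (ae_of_all _ hgf)).mp
      (le_antisymm (integral_mono hgi hf hgf) hint)).symm
  · -- `g` is not integrable, so `∫ g = 0` and then `f = 0 = g` almost everywhere.
    rw [integral_undef fun hgi => hgm hgi.1] at hint
    have hf_ae : f =ᵐ[μ] 0 :=
      (integral_eq_zero_iff_of_nonneg hf0 hf).mp (le_antisymm hint (integral_nonneg hf0))
    filter_upwards [hf_ae] with x hx
    exact le_antisymm (hx ▸ hg x) (hgf x)

end Integral

theorem expected_reconstruction_error_eq_implies_ae_mem_general
    {E : Type*} [NormedAddCommGroup E] [InnerProductSpace ℝ E]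
    [MeasurableSpace E]
    (M : Set E) (hMconv : Convex ℝ M)
    (P : E → E) (hPmeas : Measurable P) (hPmem : ∀ x, P x ∈ M)
    (hPnear : ∀ x, ∀ y ∈ M, ‖x - P x‖ ≤ ‖x - y‖)
    (R : E → E) (hRM : ∀ x, R x ∈ M)
    (hRP : ∀ x, R (P x) = R x)
    (p : Measure E)
    (hint : Integrable (fun x => ‖x - R x‖) p)
    (heq : ∫ x, ‖x - R x‖ ∂p = ∫ x, ‖x - R x‖ ∂(p.map P)) :
    ∀ᵐ x ∂p, x ∈ M := by
  have hle : ∀ x, ‖P x - R x‖ ≤ ‖x - R x‖ := fun x =>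
    norm_nearest_sub_le hMconv hPmem hPnear x (hRM x)
  have hmap : ∫ x, ‖x - R x‖ ∂(p.map P) ≤ ∫ x, ‖P x - R x‖ ∂p := by
    simpa only [hRP] using
      integral_map_le_integral_comp hPmeas.aemeasurable fun x => norm_nonneg (x - R x)
  have hae : (fun x => ‖x - R x‖) =ᵐ[p] fun x => ‖P x - R x‖ :=
    ae_eq_of_integral_le_of_le (fun x => norm_nonneg _) hle hint (heq.trans_le hmap)
  filter_upwards [hae] with x hx
  rw [← nearest_eq_of_norm_sub_le hMconv hPmem hPnear (hRM x) hx.le]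
  exact hPmem x

/-- Equality condition in Proposition 1 of the paper.  With `M`, `P`, `R`, `p` as
in the deterministic version, if the expected reconstruction error under `p`
equals the one under the pushforward `q = P_* p`, then `p`-almost every `x`
lies in `M`. -/
theorem expected_reconstruction_error_eq_implies_ae_mem
    {E : Type*} [NormedAddCommGroup E] [InnerProductSpace ℝ E] [CompleteSpace E]
    [MeasurableSpace E] [BorelSpace E]
    (M : Set E) (hM : M.Nonempty) (hMclosed : IsClosed M) (hMconv : Convex ℝ M)
    (P : E → E) (hPmeas : Measurable P) (hPmem : ∀ x, P x ∈ M)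
    (hPnear : ∀ x, ∀ y ∈ M, ‖x - P x‖ ≤ ‖x - y‖)
    (R : E → E) (hRmeas : Measurable R) (hRM : ∀ x, R x ∈ M)
    (hRP : ∀ x, R (P x) = R x)
    (p : Measure E) [IsProbabilityMeasure p]
    (hint : Integrable (fun x => ‖x - R x‖) p)
    (heq : ∫ x, ‖x - R x‖ ∂p = ∫ x, ‖x - R x‖ ∂(p.map P)) :
    ∀ᵐ x ∂p, x ∈ M :=
  expected_reconstruction_error_eq_implies_ae_mem_general M hMconv P hPmeas hPmem hPnear R hRM hRP p
    hint heq
end
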